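/- Let (X, G, Φ) be a dynamical system where X is a compact totally disconnected Hausdorff space, and let S be a finite subset of G. Then Φ has the S-shadowing property if and only if for every 𝒰 ∈ Part(X) there exists 𝒱 ∈ Part(X) with 𝒱 ≻ 𝒰 such that for every 𝒲 ∈ Part(X) with 𝒲 ≻ 𝒱, ι(𝒫𝒪_S(𝒲)) = 𝒪(𝒰), where ι : 𝒲^G → 𝒰^G is the induced map. -/

import Mathlib

open Set

universe u

/-! ### Dynamical systems: actions of a countable discrete group by homeomorphisms -/

/-- An action of a group `G` on a topological space `X`: each `act g` is a homeomorphism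
(continuity of the inverse follows from `act g⁻¹`). -/
structure DynAction (G X : Type u) [Group G] [TopologicalSpace X] where
  act : G → X → X
  continuous_act : ∀ g : G, Continuous (act g)
  act_one : ∀ x : X, act 1 x = x
  act_mul : ∀ (g g' : G) (x : X), act (g * g') x = act g (act g' x)

section Covers

variable {G X : Type u} [Group G] [TopologicalSpace X]

/-- A finite open cover of `X`. -/
def IsFOC (𝒰 : Finset (Set X)) : Prop :=
  (∀ U ∈ 𝒰, IsOpen U) ∧ ⋃₀ (𝒰 : Set (Set X)) = Set.univ

/-- A finite partition of `X` into nonempty clopen sets. -/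
def IsClopenPartition (𝒰 : Finset (Set X)) : Prop :=
  (∀ U ∈ 𝒰, IsClopen U ∧ U.Nonempty) ∧ ⋃₀ (𝒰 : Set (Set X)) = Set.univ ∧
    ∀ U ∈ 𝒰, ∀ V ∈ 𝒰, U ≠ V → U ∩ V = ∅

/-- `𝒱` refines `𝒰`: every member of `𝒱` is contained in a member of `𝒰`. -/
def Refines (𝒱 𝒰 : Finset (Set X)) : Prop :=
  ∀ V ∈ 𝒱, ∃ U ∈ 𝒰, V ⊆ U

/-- `{U g}` is a pattern of the `(S,𝒰)`-pseudo-orbit `{x g}`: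
all `U g` belong to `𝒰`, and `x (s*g) ∈ U (s*g)` and `Φ_s (x g) ∈ U (s*g)`
for all `g ∈ G`, `s ∈ S`. -/
def IsPseudoOrbitPattern (Φ : DynAction G X) (S : Set G) (𝒰 : Finset (Set X))
    (x : G → X) (U : G → Set X) : Prop :=
  (∀ g : G, U g ∈ 𝒰) ∧
    ∀ g : G, ∀ s ∈ S, x (s * g) ∈ U (s * g) ∧ Φ.act s (x g) ∈ U (s * g)

/-- `{x g}` is an `(S,𝒰)`-pseudo-orbit. -/
def IsPseudoOrbit (Φ : DynAction G X) (S : Set G) (𝒰 : Finset (Set X)) (x : G → X) : Prop :=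
  ∃ U : G → Set X, IsPseudoOrbitPattern Φ S 𝒰 x U

/-- `z` `𝒰`-shadows the family `{x g}`. -/
def Shadows (Φ : DynAction G X) (𝒰 : Finset (Set X)) (z : X) (x : G → X) : Prop :=
  ∀ g : G, ∃ U ∈ 𝒰, Φ.act g z ∈ U ∧ x g ∈ U

/-- The (topological) `S`-shadowing property. -/
def ShadowingProperty (Φ : DynAction G X) (S : Set G) : Prop :=
  ∀ 𝒰 : Finset (Set X), IsFOC 𝒰 → ∃ 𝒱 : Finset (Set X), IsFOC 𝒱 ∧
    ∀ x : G → X, IsPseudoOrbit Φ S 𝒱 x → ∃ z : X, Shadows Φ 𝒰 z x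

/-! ### Equivariant maps, factor maps, conjugacies -/

def IsEquivariant {Y : Type u} [TopologicalSpace Y]
    (ΦX : DynAction G X) (ΦY : DynAction G Y) (f : X → Y) : Prop :=
  ∀ (g : G) (x : X), f (ΦX.act g x) = ΦY.act g (f x)

/-- `f` is a factor map from `(X,G,ΦX)` onto `(Y,G,ΦY)`. -/
def IsFactorMap {Y : Type u} [TopologicalSpace Y]
    (ΦX : DynAction G X) (ΦY : DynAction G Y) (f : X → Y) : Prop :=
  Continuous f ∧ Function.Surjective f ∧ IsEquivariant ΦX ΦY f

/-- `f` is a conjugacy (bijective factor map). -/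
def IsConjugacy {Y : Type u} [TopologicalSpace Y]
    (ΦX : DynAction G X) (ΦY : DynAction G Y) (f : X → Y) : Prop :=
  Continuous f ∧ Function.Bijective f ∧ IsEquivariant ΦX ΦY f

end Covers

/-! ### Shifts, subshifts, shifts of finite type -/

/-- The shift action on `A^G`: `(σ_g x) h = x (h * g)`. -/
def shift (G A : Type u) [Group G] (g : G) (x : G → A) : G → A :=
  fun h => x (h * g)

/-- The full shift `A^G` (product topology) as a dynamical system. -/
def shiftDyn (G A : Type u) [Group G] [TopologicalSpace A] : DynAction G (G → A) where
  act := shift G A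
  continuous_act g := continuous_pi fun h => continuous_apply (h * g)
  act_one x := by funext h; simp [shift]
  act_mul g g' x := by funext h; simp [shift, mul_assoc]

/-- A subshift: a closed shift-invariant subset of the full shift `A^G`. -/
def IsSubshift {G A : Type u} [Group G] [TopologicalSpace A] (Y : Set (G → A)) : Prop :=
  IsClosed Y ∧ ∀ g : G, ∀ x ∈ Y, shift G A g x ∈ Y

/-- The cylinder set determined by the values of `P` on the finite shape `B`. -/
def cylinder {G A : Type u} (B : Finset G) (P : G → A) : Set (G → A) :=
  {y | ∀ b ∈ B, y b = P b}

/-- The language of `Y ⊆ A^G` over the finite shape `B` (a pattern is recorded by any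
function `G → A` with the prescribed values on `B`). -/
def language {G A : Type u} (B : Finset G) (Y : Set (G → A)) : Set (G → A) :=
  {P | (cylinder B P ∩ Y).Nonempty}

/-- `Y` is a shift of finite type over the finite shape `B`: it is cut out by a family of
forbidden patterns on `B`. -/
def IsSFTOver {G A : Type u} [Group G] (B : Finset G) (Y : Set (G → A)) : Prop :=
  ∃ ℱ : Set (G → A), Y = {x | ∀ g : G, ∀ P ∈ ℱ, shift G A g x ∉ cylinder B P}

/-- The shift action restricted to a subshift. -/
def subshiftDyn {G A : Type u} [Group G] [TopologicalSpace A] (Y : Set (G → A))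
    (hY : IsSubshift Y) : DynAction G ↥Y where
  act g x := ⟨shift G A g x.1, hY.2 g x.1 x.2⟩
  continuous_act g := Continuous.subtype_mk
    ((continuous_pi fun h => continuous_apply (h * g)).comp continuous_subtype_val) _
  act_one x := by apply Subtype.ext; funext h; simp [shift]
  act_mul g g' x := by apply Subtype.ext; funext h; simp [shift, mul_assoc]

/-! ### Hitting time sets and mixing-type properties -/

section Mixing

variable {G X : Type u} [Group G] [TopologicalSpace X]

/-- The hitting time set `N(U,V) = {g ≠ e : U ∩ Φ_{g⁻¹}(V) ≠ ∅}`. -/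
def hittingTimes (Φ : DynAction G X) (U V : Set X) : Set G :=
  {g : G | g ≠ 1 ∧ (U ∩ Φ.act g⁻¹ '' V).Nonempty}

/-- Topological mixing: `G \ N(U,V)` is finite for all nonempty open `U, V`. -/
def IsMixing (Φ : DynAction G X) : Prop :=
  ∀ U V : Set X, IsOpen U → IsOpen V → U.Nonempty → V.Nonempty →
    ((hittingTimes Φ U V)ᶜ : Set G).Finite

/-- Minimality: there is no nonempty proper closed invariant subset. -/
def IsMinimal (Φ : DynAction G X) : Prop :=
  ∀ K : Set X, IsClosed K → (∀ g : G, ∀ x ∈ K, Φ.act g x ∈ K) →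
    K = ∅ ∨ K = Set.univ

end Mixing

/-! ### Orbit spaces and pseudo-orbit spaces of finite covers -/

/-- An element of the finite cover `𝒰`, regarded as a letter of a (discrete) finite
alphabet. -/
structure CoverElt {X : Type u} (𝒰 : Finset (Set X)) where
  val : Set X
  mem : val ∈ 𝒰

instance {X : Type u} (𝒰 : Finset (Set X)) : TopologicalSpace (CoverElt 𝒰) := ⊥
instance {X : Type u} (𝒰 : Finset (Set X)) : DiscreteTopology (CoverElt 𝒰) := ⟨rfl⟩
instance {X : Type u} (𝒰 : Finset (Set X)) : Finite (CoverElt 𝒰) :=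
  Finite.of_injective (fun e => (⟨e.val, e.mem⟩ : {U : Set X // U ∈ 𝒰}))
    (fun a b hab => by cases a; cases b; simpa using hab)

/-- The `𝒰`-orbit space `𝒪(𝒰)`: the closure in the full shift `𝒰^G` of the set of
orbit patterns. -/
def orbitSpace {G X : Type u} [Group G] [TopologicalSpace X]
    (Φ : DynAction G X) (𝒰 : Finset (Set X)) : Set (G → CoverElt 𝒰) :=
  closure {u : G → CoverElt 𝒰 | (⋂ g : G, Φ.act g⁻¹ '' (u g).val).Nonempty}

/-- The `(S,𝒰)`-pseudo-orbit space `𝒫𝒪_S(𝒰)`: all patterns of `(S,𝒰)`-pseudo-orbits. -/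
def psOrbitSpace {G X : Type u} [Group G] [TopologicalSpace X]
    (Φ : DynAction G X) (S : Set G) (𝒰 : Finset (Set X)) : Set (G → CoverElt 𝒰) :=
  {u : G → CoverElt 𝒰 | ∃ x : G → X, IsPseudoOrbitPattern Φ S 𝒰 x (fun g => (u g).val)}

/-! The proof rests on two facts about a compact totally disconnected Hausdorff space: every
finite open cover is refined by a finite clopen partition, and for a partition `𝒰` into closed
sets the orbit space `𝒪(𝒰)` needs no closure, since the set of orbit patterns is the projection
of a closed subset of `X × 𝒰^G` along the compact factor `X`. Given these, the orbit of a point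
is a pseudo-orbit, which gives `𝒪(𝒰) ⊆ ι(𝒫𝒪_S(𝒲))` for every partition `𝒲 ≻ 𝒰`; a shadowing
point of a pseudo-orbit is exactly a point whose orbit pattern is the `ι`-image of the
pseudo-orbit's pattern, which gives the reverse inclusion and the converse implication. -/

theorem CoverElt.ext {X : Type u} {𝒰 : Finset (Set X)} {a b : CoverElt 𝒰}
    (h : a.val = b.val) : a = b := by
  cases a; cases b; simpa using h

section Covers

variable {X : Type u}

theorem Refines.refl (𝒰 : Finset (Set X)) : Refines 𝒰 𝒰 :=
  fun U hU => ⟨U, hU, subset_rfl⟩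

theorem Refines.trans {𝒰 𝒱 𝒲 : Finset (Set X)} (h𝒲 : Refines 𝒲 𝒱) (h𝒱 : Refines 𝒱 𝒰) :
    Refines 𝒲 𝒰 := by
  intro W hW
  obtain ⟨V, hV, hWV⟩ := h𝒲 W hW
  obtain ⟨U, hU, hVU⟩ := h𝒱 V hV
  exact ⟨U, hU, hWV.trans hVU⟩

theorem refines_image₂_inter_left {𝒜 ℬ : Finset (Set X)} [DecidableEq (Set X)] :
    Refines (Finset.image₂ (· ∩ ·) 𝒜 ℬ) 𝒜 := by
  intro C hC
  obtain ⟨A, hA, B, -, rfl⟩ := Finset.mem_image₂.1 hC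
  exact ⟨A, hA, inter_subset_left⟩

theorem refines_image₂_inter_right {𝒜 ℬ : Finset (Set X)} [DecidableEq (Set X)] :
    Refines (Finset.image₂ (· ∩ ·) 𝒜 ℬ) ℬ := by
  intro C hC
  obtain ⟨-, -, B, hB, rfl⟩ := Finset.mem_image₂.1 hC
  exact ⟨B, hB, inter_subset_right⟩

variable [TopologicalSpace X]

theorem IsFOC.exists_mem {𝒰 : Finset (Set X)} (h : IsFOC 𝒰) (x : X) : ∃ U ∈ 𝒰, x ∈ U :=
  mem_sUnion.1 (h.2 ▸ mem_univ x)

theorem IsFOC.image₂_inter {𝒜 ℬ : Finset (Set X)} [DecidableEq (Set X)] (h𝒜 : IsFOC 𝒜)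
    (hℬ : IsFOC ℬ) : IsFOC (Finset.image₂ (· ∩ ·) 𝒜 ℬ) := by
  refine ⟨fun C hC => ?_, eq_univ_of_forall fun x => ?_⟩
  · obtain ⟨A, hA, B, hB, rfl⟩ := Finset.mem_image₂.1 hC
    exact (h𝒜.1 A hA).inter (hℬ.1 B hB)
  · obtain ⟨A, hA, hxA⟩ := h𝒜.exists_mem x
    obtain ⟨B, hB, hxB⟩ := hℬ.exists_mem x
    exact ⟨A ∩ B, Finset.mem_image₂_of_mem hA hB, hxA, hxB⟩

theorem IsFOC.exists_coverElt_mem {𝒰 : Finset (Set X)} (h : IsFOC 𝒰) (x : X) :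
    ∃ U : CoverElt 𝒰, x ∈ U.val := by
  obtain ⟨U, hU, hxU⟩ := h.exists_mem x
  exact ⟨⟨U, hU⟩, hxU⟩

theorem IsClopenPartition.isFOC {𝒰 : Finset (Set X)} (h : IsClopenPartition 𝒰) : IsFOC 𝒰 :=
  ⟨fun U hU => (h.1 U hU).1.isOpen, h.2.1⟩

theorem IsClopenPartition.isClosed {𝒰 : Finset (Set X)} (h : IsClopenPartition 𝒰) :
    ∀ U ∈ 𝒰, IsClosed U :=
  fun U hU => (h.1 U hU).1.isClosed

theorem IsClopenPartition.nonempty {𝒰 : Finset (Set X)} (h : IsClopenPartition 𝒰) :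
    ∀ U ∈ 𝒰, U.Nonempty :=
  fun U hU => (h.1 U hU).2

theorem IsClopenPartition.coverElt_eq_of_mem {𝒰 : Finset (Set X)} (h : IsClopenPartition 𝒰)
    {a b : CoverElt 𝒰} {x : X} (ha : x ∈ a.val) (hb : x ∈ b.val) : a = b := by
  by_contra hne
  exact (h.2.2 a.val a.mem b.val b.mem fun hab => hne (CoverElt.ext hab)).subset ⟨ha, hb⟩

section TotallyDisconnected

variable [CompactSpace X] [T2Space X] [TotallyDisconnectedSpace X]

theorem exists_clopenPartition_refines_of_isClopen {ι : Type u} [Finite ι] (C : ι → Set X)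
    (hC : ∀ i, IsClopen (C i)) (hcov : ⋃ i, C i = univ) :
    ∃ 𝒱 : Finset (Set X), IsClopenPartition 𝒱 ∧ ∀ V ∈ 𝒱, ∃ i, V ⊆ C i := by
  classical
  have := Fintype.ofFinite ι
  obtain ⟨D, hDc, -, hDC, hcovD, hdisj⟩ := exists_clopen_partition_of_clopen_cover
    (Z := fun _ => ∅) (fun _ => isClosed_empty) hC (fun _ => empty_subset _)
    (fun _ _ _ _ _ => disjoint_bot_left)
  refine ⟨(Finset.univ.image D).filter Set.Nonempty, ⟨?_, ?_, ?_⟩, ?_⟩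
  · intro V hV
    obtain ⟨hV, hne⟩ := Finset.mem_filter.1 hV
    obtain ⟨i, -, rfl⟩ := Finset.mem_image.1 hV
    exact ⟨hDc i, hne⟩
  · refine eq_univ_of_forall fun x => ?_
    obtain ⟨i, hi⟩ := mem_iUnion.1 (hcovD (hcov ▸ mem_univ x))
    exact ⟨D i, Finset.mem_filter.2 ⟨Finset.mem_image_of_mem D (Finset.mem_univ i), x, hi⟩, hi⟩
  · intro U hU V hV hUV
    obtain ⟨i, -, rfl⟩ := Finset.mem_image.1 (Finset.mem_filter.1 hU).1
    obtain ⟨j, -, rfl⟩ := Finset.mem_image.1 (Finset.mem_filter.1 hV).1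
    exact disjoint_iff_inter_eq_empty.1
      (hdisj (mem_univ i) (mem_univ j) fun hij => hUV (congrArg D hij))
  · intro V hV
    obtain ⟨i, -, rfl⟩ := Finset.mem_image.1 (Finset.mem_filter.1 hV).1
    exact ⟨i, hDC i⟩

theorem IsFOC.exists_clopenPartition_refines {𝒰 : Finset (Set X)} (h : IsFOC 𝒰) :
    ∃ 𝒱 : Finset (Set X), IsClopenPartition 𝒱 ∧ Refines 𝒱 𝒰 := by
  have hC : ∀ x : X, ∃ C : Set X, IsClopen C ∧ x ∈ C ∧ ∃ U ∈ 𝒰, C ⊆ U := by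
    intro x
    obtain ⟨U, hU, hxU⟩ := h.exists_mem x
    obtain ⟨C, hCc, hxC, hCU⟩ := compact_exists_isClopen_in_isOpen (h.1 U hU) hxU
    exact ⟨C, hCc, hxC, U, hU, hCU⟩
  choose C hCc hxC hCU using hC
  obtain ⟨t, ht⟩ := isCompact_univ.elim_finite_subcover C (fun x => (hCc x).isOpen)
    (fun x _ => mem_iUnion.2 ⟨x, hxC x⟩)
  obtain ⟨𝒱, h𝒱, h𝒱C⟩ := exists_clopenPartition_refines_of_isClopen (fun x : t => C x)
    (fun x => hCc x) (eq_univ_of_forall fun y => by simpa using ht (mem_univ y))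
  refine ⟨𝒱, h𝒱, fun V hV => ?_⟩
  obtain ⟨x, hVx⟩ := h𝒱C V hV
  obtain ⟨U, hU, hCxU⟩ := hCU x
  exact ⟨U, hU, hVx.trans hCxU⟩

end TotallyDisconnected

end Covers

section Dynamics

variable {G X : Type u} [Group G] [TopologicalSpace X]

def orbitPatterns (Φ : DynAction G X) (𝒰 : Finset (Set X)) : Set (G → CoverElt 𝒰) :=
  {u | ∃ z : X, ∀ g : G, Φ.act g z ∈ (u g).val}

theorem DynAction.image_inv_eq_preimage (Φ : DynAction G X) (g : G) (V : Set X) :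
    Φ.act g⁻¹ '' V = Φ.act g ⁻¹' V := by
  refine congrFun (image_eq_preimage_of_inverse (fun x => ?_) fun x => ?_) V
  · rw [← Φ.act_mul, mul_inv_cancel, Φ.act_one]
  · rw [← Φ.act_mul, inv_mul_cancel, Φ.act_one]

theorem setOf_iInter_image_nonempty_eq_orbitPatterns (Φ : DynAction G X) (𝒰 : Finset (Set X)) :
    {u : G → CoverElt 𝒰 | (⋂ g : G, Φ.act g⁻¹ '' (u g).val).Nonempty} = orbitPatterns Φ 𝒰 := by
  ext u
  simp only [DynAction.image_inv_eq_preimage, nonempty_def, mem_iInter, mem_preimage]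
  rfl

theorem isClosed_setOf_mem_val {𝒰 : Finset (Set X)} (h𝒰 : ∀ U ∈ 𝒰, IsClosed U) :
    IsClosed {p : X × CoverElt 𝒰 | p.1 ∈ p.2.val} := by
  have : {p : X × CoverElt 𝒰 | p.1 ∈ p.2.val} = ⋃ U : CoverElt 𝒰, U.val ×ˢ {U} := by
    ext ⟨x, U⟩
    simp
  rw [this]
  exact isClosed_iUnion_of_finite fun U => (h𝒰 _ U.mem).prod (isClosed_discrete _)

theorem isClosed_orbitPatterns [CompactSpace X] (Φ : DynAction G X) {𝒰 : Finset (Set X)}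
    (h𝒰 : ∀ U ∈ 𝒰, IsClosed U) : IsClosed (orbitPatterns Φ 𝒰) := by
  have : orbitPatterns Φ 𝒰 = Prod.snd '' ⋂ g : G,
      (fun p : X × (G → CoverElt 𝒰) => (Φ.act g p.1, p.2 g)) ⁻¹' {q | q.1 ∈ q.2.val} := by
    ext u
    simp [orbitPatterns]
  rw [this]
  refine isClosedMap_snd_of_compactSpace _ (isClosed_iInter fun g => ?_)
  exact (isClosed_setOf_mem_val h𝒰).preimage
    (((Φ.continuous_act g).comp continuous_fst).prodMk ((continuous_apply g).comp continuous_snd))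

theorem orbitSpace_eq_orbitPatterns [CompactSpace X] (Φ : DynAction G X)
    {𝒰 : Finset (Set X)} (h𝒰 : ∀ U ∈ 𝒰, IsClosed U) : orbitSpace Φ 𝒰 = orbitPatterns Φ 𝒰 := by
  rw [orbitSpace, setOf_iInter_image_nonempty_eq_orbitPatterns,
    (isClosed_orbitPatterns Φ h𝒰).closure_eq]

theorem isPseudoOrbitPattern_orbit (Φ : DynAction G X) (S : Set G) {𝒰 : Finset (Set X)}
    {U : G → Set X} (z : X) (hU : ∀ g, U g ∈ 𝒰) (hz : ∀ g, Φ.act g z ∈ U g) :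
    IsPseudoOrbitPattern Φ S 𝒰 (fun g => Φ.act g z) U :=
  ⟨hU, fun g s _ => ⟨hz (s * g), Φ.act_mul s g z ▸ hz (s * g)⟩⟩

theorem IsPseudoOrbitPattern.isPseudoOrbit_of_refines {Φ : DynAction G X} {S : Set G}
    {𝒱 𝒲 : Finset (Set X)} {x : G → X} {W : G → Set X}
    (hx : IsPseudoOrbitPattern Φ S 𝒲 x W) (h𝒲𝒱 : Refines 𝒲 𝒱) : IsPseudoOrbit Φ S 𝒱 x := by
  choose V hV hWV using fun g => h𝒲𝒱 (W g) (hx.1 g)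
  exact ⟨V, hV, fun g s hs => ⟨hWV _ (hx.2 g s hs).1, hWV _ (hx.2 g s hs).2⟩⟩

theorem Shadows.mono {Φ : DynAction G X} {𝒰 𝒱 : Finset (Set X)} {z : X} {x : G → X}
    (hz : Shadows Φ 𝒱 z x) (h𝒱𝒰 : Refines 𝒱 𝒰) : Shadows Φ 𝒰 z x := by
  intro g
  obtain ⟨V, hV, hzV, hxV⟩ := hz g
  obtain ⟨U, hU, hVU⟩ := h𝒱𝒰 V hV
  exact ⟨U, hU, hVU hzV, hVU hxV⟩

theorem exists_isPseudoOrbitPattern_mem_of_mem_psOrbitSpace {Φ : DynAction G X} {S : Set G}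
    {𝒲 : Finset (Set X)} (h𝒲 : ∀ W ∈ 𝒲, W.Nonempty) {w : G → CoverElt 𝒲}
    (hw : w ∈ psOrbitSpace Φ S 𝒲) :
    ∃ x : G → X, IsPseudoOrbitPattern Φ S 𝒲 x (fun g => (w g).val) ∧
      ∀ g, x g ∈ (w g).val := by
  -- For `S = ∅` the pattern does not constrain `x`, so a point of each `w g` is chosen instead.
  rcases S.eq_empty_or_nonempty with rfl | ⟨s, hs⟩
  · choose x hx using fun g => h𝒲 _ (w g).mem
    exact ⟨x, ⟨fun g => (w g).mem, fun _ _ hs => absurd hs (notMem_empty _)⟩, hx⟩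
  · obtain ⟨x, hx⟩ := hw
    refine ⟨x, hx, fun g => ?_⟩
    simpa using (hx.2 (s⁻¹ * g) s hs).1

theorem IsClopenPartition.mem_psOrbitSpace {Φ : DynAction G X} {S : Set G}
    {𝒱 : Finset (Set X)} (h𝒱 : IsClopenPartition 𝒱) {x : G → X} (hx : IsPseudoOrbit Φ S 𝒱 x)
    {w : G → CoverElt 𝒱} (hxw : ∀ g, x g ∈ (w g).val) : w ∈ psOrbitSpace Φ S 𝒱 := by
  obtain ⟨V, hV, hxV⟩ := hx
  refine ⟨x, fun g => (w g).mem, fun g s hs => ⟨hxw _, ?_⟩⟩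
  have : w (s * g) = ⟨V (s * g), hV _⟩ := h𝒱.coverElt_eq_of_mem (hxw _) (hxV g s hs).1
  simpa only [this] using (hxV g s hs).2

theorem orbitPatterns_subset_image_psOrbitSpace (Φ : DynAction G X) (S : Set G)
    {𝒰 𝒲 : Finset (Set X)} (h𝒰 : IsClopenPartition 𝒰) (h𝒲 : IsFOC 𝒲)
    (ι : CoverElt 𝒲 → CoverElt 𝒰) (hι : ∀ W : CoverElt 𝒲, W.val ⊆ (ι W).val) :
    orbitPatterns Φ 𝒰 ⊆ (fun w g => ι (w g)) '' psOrbitSpace Φ S 𝒲 := by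
  rintro u ⟨z, hz⟩
  choose w hw using fun g => h𝒲.exists_coverElt_mem (Φ.act g z)
  refine ⟨w, ⟨_, isPseudoOrbitPattern_orbit Φ S z (fun g => (w g).mem) hw⟩, funext fun g => ?_⟩
  exact h𝒰.coverElt_eq_of_mem (hι _ (hw g)) (hz g)

theorem image_psOrbitSpace_subset_orbitPatterns (Φ : DynAction G X) (S : Set G)
    {𝒰 𝒱 𝒲 : Finset (Set X)} (h𝒰 : IsClopenPartition 𝒰) (h𝒲 : ∀ W ∈ 𝒲, W.Nonempty)
    (h𝒲𝒱 : Refines 𝒲 𝒱) (hshadow : ∀ x, IsPseudoOrbit Φ S 𝒱 x → ∃ z, Shadows Φ 𝒰 z x)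
    (ι : CoverElt 𝒲 → CoverElt 𝒰) (hι : ∀ W : CoverElt 𝒲, W.val ⊆ (ι W).val) :
    (fun w g => ι (w g)) '' psOrbitSpace Φ S 𝒲 ⊆ orbitPatterns Φ 𝒰 := by
  rintro _ ⟨w, hw, rfl⟩
  obtain ⟨x, hx, hxw⟩ := exists_isPseudoOrbitPattern_mem_of_mem_psOrbitSpace h𝒲 hw
  obtain ⟨z, hz⟩ := hshadow x (hx.isPseudoOrbit_of_refines h𝒲𝒱)
  refine ⟨z, fun g => ?_⟩
  obtain ⟨U, hU, hzU, hxU⟩ := hz g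
  have : (⟨U, hU⟩ : CoverElt 𝒰) = ι (w g) := h𝒰.coverElt_eq_of_mem hxU (hι _ (hxw g))
  simpa only [← this] using hzU

end Dynamics

theorem shadowing_iff_iota_psOrbit_eq_orbit_general
    {G X : Type} [Group G] [TopologicalSpace X]
    [CompactSpace X] [T2Space X] [TotallyDisconnectedSpace X]
    (Φ : DynAction G X) (S : Finset G) :
    ShadowingProperty Φ (S : Set G) ↔
      ∀ 𝒰 : Finset (Set X), IsClopenPartition 𝒰 →
        ∃ 𝒱 : Finset (Set X), IsClopenPartition 𝒱 ∧ Refines 𝒱 𝒰 ∧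
          ∀ 𝒲 : Finset (Set X), IsClopenPartition 𝒲 → Refines 𝒲 𝒱 →
            ∀ ι : CoverElt 𝒲 → CoverElt 𝒰, (∀ W : CoverElt 𝒲, W.val ⊆ (ι W).val) →
              (fun (u : G → CoverElt 𝒲) => fun h => ι (u h)) ''
                  psOrbitSpace Φ (S : Set G) 𝒲
                = orbitSpace Φ 𝒰 := by
  classical
  constructor
  · intro hshadow 𝒰 h𝒰
    obtain ⟨𝒱₀, h𝒱₀, hshadow𝒱₀⟩ := hshadow 𝒰 h𝒰.isFOC
    obtain ⟨𝒱, h𝒱, h𝒱ref⟩ := (h𝒱₀.image₂_inter h𝒰.isFOC).exists_clopenPartition_refines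
    refine ⟨𝒱, h𝒱, h𝒱ref.trans refines_image₂_inter_right, fun 𝒲 h𝒲 h𝒲𝒱 ι hι => ?_⟩
    rw [orbitSpace_eq_orbitPatterns Φ h𝒰.isClosed]
    exact (image_psOrbitSpace_subset_orbitPatterns Φ _ h𝒰 h𝒲.nonempty
      ((h𝒲𝒱.trans h𝒱ref).trans refines_image₂_inter_left) hshadow𝒱₀ ι hι).antisymm
      (orbitPatterns_subset_image_psOrbitSpace Φ _ h𝒰 h𝒲.isFOC ι hι)
  · intro hcond 𝒰₀ h𝒰₀
    obtain ⟨𝒰, h𝒰, h𝒰𝒰₀⟩ := h𝒰₀.exists_clopenPartition_refines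
    obtain ⟨𝒱, h𝒱, h𝒱𝒰, hpatterns⟩ := hcond 𝒰 h𝒰
    choose ι hι using fun V : CoverElt 𝒱 => h𝒱𝒰 V.val V.mem
    have heq := hpatterns 𝒱 h𝒱 (Refines.refl 𝒱) (fun V => ⟨ι V, (hι V).1⟩) fun V => (hι V).2
    refine ⟨𝒱, h𝒱.isFOC, fun x hx => ?_⟩
    choose w hxw using fun g => h𝒱.isFOC.exists_coverElt_mem (x g)
    obtain ⟨z, hz⟩ : _ ∈ orbitPatterns Φ 𝒰 := by
      rw [← orbitSpace_eq_orbitPatterns Φ h𝒰.isClosed, ← heq]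
      exact mem_image_of_mem _ (h𝒱.mem_psOrbitSpace hx hxw)
    exact ⟨z, Shadows.mono (fun g => ⟨_, (hι (w g)).1, hz g, (hι (w g)).2 (hxw g)⟩) h𝒰𝒰₀⟩

/-- **Lemma 4.3.** Characterization of the `S`-shadowing property on compact totally
disconnected Hausdorff spaces via clopen partitions: `ι(𝒫𝒪_S(𝒲)) = 𝒪(𝒰)` for all
sufficiently fine partitions `𝒲`. -/
theorem shadowing_iff_iota_psOrbit_eq_orbit
    {G X : Type} [Group G] [Countable G] [TopologicalSpace X]
    [CompactSpace X] [T2Space X] [TotallyDisconnectedSpace X]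
    (Φ : DynAction G X) (S : Finset G) :
    ShadowingProperty Φ (S : Set G) ↔
      ∀ 𝒰 : Finset (Set X), IsClopenPartition 𝒰 →
        ∃ 𝒱 : Finset (Set X), IsClopenPartition 𝒱 ∧ Refines 𝒱 𝒰 ∧
          ∀ 𝒲 : Finset (Set X), IsClopenPartition 𝒲 → Refines 𝒲 𝒱 →
            ∀ ι : CoverElt 𝒲 → CoverElt 𝒰, (∀ W : CoverElt 𝒲, W.val ⊆ (ι W).val) →
              (fun (u : G → CoverElt 𝒲) => fun h => ι (u h)) ''
                  psOrbitSpace Φ (S : Set G) 𝒲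
                = orbitSpace Φ 𝒰 :=
  shadowing_iff_iota_psOrbit_eq_orbit_general Φ S
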